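/- arXiv:2110.02753 — 3 statements merged into one kernel-verified Lean document; each statement's English description precedes it below -/
import Mathlib

section
/- Suppose there exists h̄ ∈ Σ_m with |supp(h̄)| = n and a bijection σ : supp(h̄) → {1,…,n} such that h̄_i = h_{σ(i)} for all i ∈ supp(h̄) and C̄_{kl} = C_{σ(k)σ(l)} for all k, l ∈ supp(h̄). Then srGW(C, h, C̄) = 0. -/
open Finset
open scoped BigOperators Classical

noncomputable section

/-- The probability simplex in `ℝ^k`. -/
def probSimplex (k : ℕ) : Set (Fin k → ℝ) :=
  {h | (∀ i, 0 ≤ h i) ∧ ∑ i, h i = 1}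

/-- The quadratic Gromov-Wasserstein cost `L(C, C̄, T)`. -/
def GWcost {n m : ℕ} (C : Matrix (Fin n) (Fin n) ℝ) (Cb : Matrix (Fin m) (Fin m) ℝ)
    (T : Matrix (Fin n) (Fin m) ℝ) : ℝ :=
  ∑ i, ∑ j, ∑ k, ∑ l, |C i j - Cb k l| ^ 2 * T i k * T j l

/-- The set of couplings `U(h, h̄)`. -/
def couplings {n m : ℕ} (h : Fin n → ℝ) (hb : Fin m → ℝ) : Set (Matrix (Fin n) (Fin m) ℝ) :=
  {T | (∀ i k, 0 ≤ T i k) ∧ (∀ i, ∑ k, T i k = h i) ∧ (∀ k, ∑ i, T i k = hb k)}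

/-- The semi-relaxed coupling set `U(h, m)`. -/
def srCouplings {n : ℕ} (h : Fin n → ℝ) (m : ℕ) : Set (Matrix (Fin n) (Fin m) ℝ) :=
  {T | (∀ i k, 0 ≤ T i k) ∧ (∀ i, ∑ k, T i k = h i)}

theorem srGW_eq_zero_of_iso_subgraph {n m : ℕ} (h : Fin n → ℝ) (hh : h ∈ probSimplex n)
    (hfull : ∀ i, 0 < h i)
    (C : Matrix (Fin n) (Fin n) ℝ) (Cb : Matrix (Fin m) (Fin m) ℝ)
    (hb : Fin m → ℝ) (hhb : hb ∈ probSimplex m) (σ : Fin m → Fin n)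
    (hσ : Set.BijOn σ {i | 0 < hb i} Set.univ)
    (hmass : ∀ i, 0 < hb i → hb i = h (σ i))
    (hstruct : ∀ k l, 0 < hb k → 0 < hb l → Cb k l = C (σ k) (σ l)) :
    sInf (GWcost C Cb '' srCouplings h m) = 0 := by
  set T : Matrix (Fin n) (Fin m) ℝ := fun i k => if 0 < hb k ∧ σ k = i then hb k else 0 with hT
  have hTnn : ∀ i k, 0 ≤ T i k := by
    intro i k
    simp only [hT]
    split
    · exact le_of_lt (by tauto)
    · exact le_rfl
  have hTmem : T ∈ srCouplings h m := by
    refine ⟨hTnn, fun i => ?_⟩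
    obtain ⟨k0, hk0, hσk0⟩ := hσ.surjOn (Set.mem_univ i)
    rw [Finset.sum_eq_single k0]
    · simp only [hT]
      rw [if_pos ⟨hk0, hσk0⟩]
      rw [hmass k0 hk0, hσk0]
    · intro b _ hb'
      simp only [hT]
      rw [if_neg]
      rintro ⟨hbpos, hσb⟩
      exact hb' (hσ.injOn hbpos hk0 (hσb.trans hσk0.symm))
    · intro habs; exact absurd (Finset.mem_univ k0) habs
  have hcost : GWcost C Cb T = 0 := by
    unfold GWcost
    refine Finset.sum_eq_zero fun i _ => Finset.sum_eq_zero fun j _ =>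
      Finset.sum_eq_zero fun k _ => Finset.sum_eq_zero fun l _ => ?_
    by_cases hk : 0 < hb k ∧ σ k = i
    · by_cases hl : 0 < hb l ∧ σ l = j
      · have : Cb k l = C i j := by
          rw [hstruct k l hk.1 hl.1, hk.2, hl.2]
        rw [this]
        simp
      · have : T j l = 0 := by simp only [hT]; rw [if_neg hl]
        rw [this, mul_zero]
    · have : T i k = 0 := by simp only [hT]; rw [if_neg hk]
      rw [this, mul_zero, zero_mul]
  have h0mem : (0 : ℝ) ∈ GWcost C Cb '' srCouplings h m := ⟨T, hTmem, hcost⟩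
  have hbdd : ∀ x ∈ GWcost C Cb '' srCouplings h m, (0:ℝ) ≤ x := by
    rintro x ⟨S, hS, rfl⟩
    refine Finset.sum_nonneg fun i _ => Finset.sum_nonneg fun j _ =>
      Finset.sum_nonneg fun k _ => Finset.sum_nonneg fun l _ => ?_
    exact mul_nonneg (mul_nonneg (by positivity) (hS.1 i k)) (hS.1 j l)
  exact le_antisymm (csInf_le ⟨0, hbdd⟩ h0mem) (le_csInf ⟨0, h0mem⟩ hbdd)
end
end

section
/- Given σ : supp(h̄) → {1,…,n} a bijection with h̄_i = h_{σ(i)} and C̄_{kl} = C_{σ(k)σ(l)} on supp(h̄), the coupling T defined by T_{σ(i), i} = h̄_i for i ∈ supp(h̄) and zero elsewhere satisfies T ∈ U(h, h̄) and L(C, C̄, T) = 0. -/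
open Finset
open scoped BigOperators Classical

noncomputable section

theorem iso_coupling_zero_cost {n m : ℕ} (h : Fin n → ℝ) (hh : h ∈ probSimplex n)
    (hfull : ∀ i, 0 < h i)
    (C : Matrix (Fin n) (Fin n) ℝ) (Cb : Matrix (Fin m) (Fin m) ℝ)
    (hb : Fin m → ℝ) (hhb : hb ∈ probSimplex m) (σ : Fin m → Fin n)
    (hσ : Set.BijOn σ {i | 0 < hb i} Set.univ)
    (hmass : ∀ i, 0 < hb i → hb i = h (σ i))
    (hstruct : ∀ k l, 0 < hb k → 0 < hb l → Cb k l = C (σ k) (σ l)) :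
    (fun a b => if 0 < hb b ∧ a = σ b then hb b else 0) ∈ couplings h hb ∧
    GWcost C Cb (fun a b => if 0 < hb b ∧ a = σ b then hb b else 0) = 0 := by
  constructor
  · refine ⟨?_, ?_, ?_⟩
    · intro i k
      by_cases hc : 0 < hb k ∧ i = σ k
      · simp [hc, hc.1.le]
      · simp [hc]
    · intro a
      obtain ⟨b0, hb0, hσb0⟩ := hσ.surjOn (Set.mem_univ a)
      have hb0 : 0 < hb b0 := hb0
      rw [Finset.sum_eq_single b0]
      · show (if 0 < hb b0 ∧ a = σ b0 then hb b0 else 0) = h a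
        rw [if_pos ⟨hb0, hσb0.symm⟩, hmass b0 hb0, hσb0]
      · intro b _ hne
        by_cases hpos : 0 < hb b
        · have : a ≠ σ b := fun hEq =>
            hne (hσ.injOn hpos hb0 (by rw [← hEq, hσb0]))
          simp [hpos, this]
        · simp [hpos]
      · simp
    · intro b
      by_cases hpos : 0 < hb b
      · simp [hpos]
      · have : hb b = 0 := le_antisymm (not_lt.mp hpos) (hhb.1 b)
        simp [hpos, this]
  · unfold GWcost
    refine Finset.sum_eq_zero fun i _ => Finset.sum_eq_zero fun j _ =>
      Finset.sum_eq_zero fun k _ => Finset.sum_eq_zero fun l _ => ?_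
    by_cases h1 : 0 < hb k ∧ i = σ k
    · by_cases h2 : 0 < hb l ∧ j = σ l
      · have : C i j = Cb k l := by rw [h1.2, h2.2, hstruct k l h1.1 h2.1]
        simp [this]
      · simp [h2]
    · simp [h1]
end
end

section
/- For T₁, T₂ ∈ ℝ^{n×m} with strictly positive entries and equal row sums given by h ∈ Σ_n, one has ‖T₁ − T₂‖_F ≤ ‖log T₁ − log T₂‖_F, where log is applied componentwise and ‖·‖_F is the Frobenius norm. -/
open Finset
open scoped BigOperators Classical

noncomputable section

lemma aux_le_log {a b : ℝ} (ha : 0 < a) (hb : 0 < b) (hab : a ≤ b) (hb1 : b ≤ 1) :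
    b - a ≤ Real.log b - Real.log a := by
  have h1 : Real.log (a / b) ≤ a / b - 1 :=
    Real.log_le_sub_one_of_pos (div_pos ha hb)
  rw [Real.log_div (ne_of_gt ha) (ne_of_gt hb)] at h1
  have h2 : 1 - a / b ≤ Real.log b - Real.log a := by linarith
  have h3 : b - a ≤ (b - a) / b := by
    rw [le_div_iff₀ hb]; nlinarith
  have h4 : (b - a) / b = 1 - a / b := by field_simp
  linarith

lemma aux_sq {a b : ℝ} (ha : 0 < a) (hb : 0 < b) (ha1 : a ≤ 1) (hb1 : b ≤ 1) :
    (a - b) ^ 2 ≤ (Real.log a - Real.log b) ^ 2 := by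
  rcases le_total a b with hab | hab
  · have := aux_le_log ha hb hab hb1
    nlinarith [Real.log_nonpos ha.le ha1, Real.log_nonpos hb.le hb1]
  · have := aux_le_log hb ha hab ha1
    nlinarith [Real.log_nonpos ha.le ha1, Real.log_nonpos hb.le hb1]

theorem frobenius_le_log_frobenius {n m : ℕ} (h : Fin n → ℝ) (hh : h ∈ probSimplex n)
    (T₁ T₂ : Matrix (Fin n) (Fin m) ℝ)
    (hT₁ : T₁ ∈ srCouplings h m) (hT₂ : T₂ ∈ srCouplings h m)
    (hp₁ : ∀ i j, 0 < T₁ i j) (hp₂ : ∀ i j, 0 < T₂ i j) :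
    Real.sqrt (∑ i, ∑ j, (T₁ i j - T₂ i j) ^ 2)
      ≤ Real.sqrt (∑ i, ∑ j, (Real.log (T₁ i j) - Real.log (T₂ i j)) ^ 2) := by
  obtain ⟨hpos, hsum⟩ := hh
  have hle : ∀ i, h i ≤ 1 := by
    intro i
    calc h i ≤ ∑ j, h j := Finset.single_le_sum (fun j _ => hpos j) (mem_univ i)
    _ = 1 := hsum
  have key : ∀ (T : Matrix (Fin n) (Fin m) ℝ), T ∈ srCouplings h m →
      (∀ i j, 0 < T i j) → ∀ i j, T i j ≤ 1 := by
    intro T ⟨hnn, hrow⟩ _ i j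
    calc T i j ≤ ∑ k, T i k := Finset.single_le_sum (fun k _ => hnn i k) (mem_univ j)
    _ = h i := hrow i
    _ ≤ 1 := hle i
  apply Real.sqrt_le_sqrt
  apply Finset.sum_le_sum
  intro i _
  apply Finset.sum_le_sum
  intro j _
  exact aux_sq (hp₁ i j) (hp₂ i j) (key T₁ hT₁ hp₁ i j) (key T₂ hT₂ hp₂ i j)
end
end
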